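/- (Off-by-one hard IQC) Let f ∈ S(m,L) with reference point u_⋆ = ∇f(y_⋆). For any sequence y_0, y_1, ... in ℝ^d, writing ỹ_k = y_k - y_⋆ and ũ_k = ∇f(y_k) - u_⋆, we have for every k ≥ 0: (ũ_0 - mỹ_0)ᵀ(Lỹ_0 - ũ_0) + Σ_{t=1}^{k} (ũ_t - mỹ_t)ᵀ(L(ỹ_t - ỹ_{t-1}) - (ũ_t - ũ_{t-1})) ≥ 0. -/

import Mathlib

/-!
Write `M = L - m`. Removing `(m/2)‖z‖²` and a linear term from `f` leaves a convex function `F`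
whose gradient `q z = ∇f z - ∇f y⋆ - m (z - y⋆)` vanishes at `y⋆` and satisfies
`0 ≤ ⟪q a - q b, a - b⟫ ≤ M ‖a - b‖²`. Comparing `F` along one gradient step gives the
co-coercivity bound `F x + ⟪q x, y - x⟫ + ‖q y - q x‖² / (2M) ≤ F y`, which makes
`W z = M (F z - F y⋆) - ‖q z‖² / 2` a nonnegative storage function whose increment
`W y_t - W y_{t-1}` is at most the `t`-th summand of the IQC (and `W y_0 - W y⋆` at most the
initial term). Telescoping, the IQC sum dominates `W y_k ≥ 0`.
-/

open RealInnerProductSpace Finset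

lemma image_one_le_of_deriv_sub_le_mul {φ φ' : ℝ → ℝ} {C : ℝ}
    (hφ : ∀ t, HasDerivAt φ (φ' t) t) (hφ' : ∀ t ∈ Set.Ioo (0 : ℝ) 1, φ' t - φ' 0 ≤ C * t) :
    φ 1 ≤ φ 0 + φ' 0 + C / 2 := by
  set χ : ℝ → ℝ := fun t => φ t - t * φ' 0 - C / 2 * t ^ 2
  have hχ : ∀ t, HasDerivAt χ (φ' t - φ' 0 - C * t) t := fun t =>
    (((hφ t).sub (hasDerivAt_mul_const (φ' 0))).sub
      ((hasDerivAt_pow 2 t).const_mul (C / 2))).congr_deriv (by norm_num; ring)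
  have hanti : AntitoneOn χ (Set.Icc 0 1) := by
    refine antitoneOn_of_deriv_nonpos (convex_Icc 0 1)
      (HasDerivAt.continuousOn fun t _ => hχ t)
      (fun t _ => (hχ t).differentiableAt.differentiableWithinAt) fun t ht => ?_
    rw [interior_Icc] at ht
    rw [(hχ t).deriv]
    linarith [hφ' t ht]
  have := hanti (by simp) (by simp) zero_le_one
  simp only [χ] at this
  linarith

variable {E : Type*} [NormedAddCommGroup E] [InnerProductSpace ℝ E] [CompleteSpace E]

lemma HasGradientAt.hasDerivAt_comp_line {F : E → ℝ} {q x y : E} (t : ℝ)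
    (hF : HasGradientAt F q (y + t • (x - y))) :
    HasDerivAt (fun s : ℝ => F (y + s • (x - y))) ⟪q, x - y⟫ t := by
  have hline : HasDerivAt (fun s : ℝ => y + s • (x - y)) (x - y) t := by
    simpa using ((hasDerivAt_id t).smul_const (x - y)).const_add y
  have h := (hasGradientAt_iff_hasFDerivAt.mp hF).comp_hasDerivAt t hline
  simp only [InnerProductSpace.toDual_apply_apply] at h
  exact h

lemma HasGradientAt.neg {F : E → ℝ} {q x : E} (hF : HasGradientAt F q x) :
    HasGradientAt (fun z => -F z) (-q) x :=
  hasGradientAt_iff_hasFDerivAt.mpr <| by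
    rw [map_neg]
    exact (hasGradientAt_iff_hasFDerivAt.mp hF).neg

lemma HasGradientAt.sub_inner_left {F : E → ℝ} {q x : E} (hF : HasGradientAt F q x) (a : E) :
    HasGradientAt (fun z => F z - ⟪a, z⟫) (q - a) x :=
  hasGradientAt_iff_hasFDerivAt.mpr <| by
    rw [map_sub]
    exact (hasGradientAt_iff_hasFDerivAt.mp hF).sub (innerSL ℝ a).hasFDerivAt

lemma HasGradientAt.sub_mul_norm_sq {F : E → ℝ} {q x : E} (hF : HasGradientAt F q x) (c : ℝ) :
    HasGradientAt (fun z => F z - c / 2 * ‖z‖ ^ 2) (q - c • x) x :=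
  hasGradientAt_iff_hasFDerivAt.mpr <| by
    refine ((hasGradientAt_iff_hasFDerivAt.mp hF).sub
      ((hasStrictFDerivAt_norm_sq x).hasFDerivAt.const_mul (c / 2))).congr_fderiv ?_
    ext w
    simp
    ring

section GradientInequalities

variable {F : E → ℝ} {q : E → E} (hF : ∀ z, HasGradientAt F (q z) z)
include hF

lemma le_add_inner_add_of_inner_sub_le {C : ℝ}
    (hq : ∀ a b, ⟪q a - q b, a - b⟫ ≤ C * ‖a - b‖ ^ 2) (x y : E) :
    F x ≤ F y + ⟪q y, x - y⟫ + C / 2 * ‖x - y‖ ^ 2 := by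
  have key := image_one_le_of_deriv_sub_le_mul (C := C * ‖x - y‖ ^ 2)
    (fun t => (hF _).hasDerivAt_comp_line (x := x) (y := y) t) fun t ht => by
      have h := hq (y + t • (x - y)) y
      rw [add_sub_cancel_left, inner_smul_right, norm_smul, Real.norm_of_nonneg ht.1.le,
        inner_sub_left] at h
      simp only [zero_smul, add_zero]
      nlinarith [ht.1]
  simp only [zero_smul, add_zero, one_smul, add_sub_cancel] at key
  linarith

lemma add_inner_le_of_inner_sub_nonneg (hq : ∀ a b, 0 ≤ ⟪q a - q b, a - b⟫) (x y : E) :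
    F y + ⟪q y, x - y⟫ ≤ F x := by
  have := le_add_inner_add_of_inner_sub_le (fun z => (hF z).neg) (C := 0)
    (fun a b => by rw [zero_mul, neg_sub_neg, ← neg_sub, inner_neg_left, neg_nonpos]; exact hq a b)
    x y
  simp only [inner_neg_left, zero_div, zero_mul, add_zero] at this
  linarith

end GradientInequalities

noncomputable def iqcStorage (F : E → ℝ) (q : E → E) (M : ℝ) (ystar z : E) : ℝ :=
  M * (F z - F ystar) - ‖q z‖ ^ 2 / 2

section Cocoercive

variable {F : E → ℝ} {q : E → E} {M : ℝ} (hF : ∀ z, HasGradientAt F (q z) z)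
  (hmono : ∀ a b, 0 ≤ ⟪q a - q b, a - b⟫) (hlip : ∀ a b, ⟪q a - q b, a - b⟫ ≤ M * ‖a - b‖ ^ 2)
include hF hmono hlip

lemma add_inner_add_norm_sq_div_le (hM : 0 < M) (x y : E) :
    F x + ⟪q x, y - x⟫ + ‖q y - q x‖ ^ 2 / (2 * M) ≤ F y := by
  set G := fun z => F z - ⟪q x, z⟫
  have hG : ∀ z, HasGradientAt G (q z - q x) z := fun z => (hF z).sub_inner_left (q x)
  -- `G` is minimal at `x`, and the gradient step `w` from `y` lowers `G` by `‖∇G y‖² / (2M)`.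
  set w := y - M⁻¹ • (q y - q x)
  have hxw : G x ≤ G w := by
    simpa using add_inner_le_of_inner_sub_nonneg hG (fun a b => by simpa using hmono a b) w x
  have hwy : G w ≤ G y - ‖q y - q x‖ ^ 2 / (2 * M) := by
    have h := le_add_inner_add_of_inner_sub_le hG (fun a b => by simpa using hlip a b) w y
    rw [show w - y = -(M⁻¹ • (q y - q x)) by simp [w], inner_neg_right, inner_smul_right,
      real_inner_self_eq_norm_sq, norm_neg, norm_smul,
      Real.norm_of_nonneg (inv_nonneg.2 hM.le)] at h
    have e : -(M⁻¹ * ‖q y - q x‖ ^ 2) + M / 2 * (M⁻¹ * ‖q y - q x‖) ^ 2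
        = -(‖q y - q x‖ ^ 2 / (2 * M)) := by
      field_simp
      ring
    linarith
  simp only [G] at hxw hwy
  rw [inner_sub_right]
  linarith

lemma mul_add_inner_add_norm_sq_le (hM : 0 < M) (x y : E) :
    M * (F x + ⟪q x, y - x⟫) + ‖q y - q x‖ ^ 2 / 2 ≤ M * F y := by
  calc M * (F x + ⟪q x, y - x⟫) + ‖q y - q x‖ ^ 2 / 2
      = M * (F x + ⟪q x, y - x⟫ + ‖q y - q x‖ ^ 2 / (2 * M)) := by field_simp
    _ ≤ M * F y :=
      mul_le_mul_of_nonneg_left (add_inner_add_norm_sq_div_le hF hmono hlip hM x y) hM.le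

lemma iqcStorage_nonneg (hM : 0 < M) {ystar : E} (hstar : q ystar = 0) (z : E) :
    0 ≤ iqcStorage F q M ystar z := by
  have h := mul_add_inner_add_norm_sq_le hF hmono hlip hM ystar z
  rw [hstar, inner_zero_left, sub_zero] at h
  unfold iqcStorage
  linarith

lemma iqcStorage_sub_le (hM : 0 < M) (ystar a b : E) :
    iqcStorage F q M ystar a - iqcStorage F q M ystar b ≤ ⟪q a, M • (a - b) - (q a - q b)⟫ := by
  have h := mul_add_inner_add_norm_sq_le hF hmono hlip hM a b
  have hpar := norm_sub_sq_real (q a) (q b)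
  rw [← neg_sub a b, inner_neg_right, norm_sub_rev] at h
  rw [inner_sub_right, inner_smul_right, inner_sub_right (q a) (q a), real_inner_self_eq_norm_sq]
  unfold iqcStorage
  linarith

theorem off_by_one_iqc_of_hasGradientAt (hM : 0 < M) {ystar : E} (hstar : q ystar = 0)
    (y : ℕ → E) (k : ℕ) :
    0 ≤ ⟪q (y 0), M • (y 0 - ystar) - q (y 0)⟫ +
      ∑ t ∈ Icc 1 k, ⟪q (y t), M • (y t - y (t - 1)) - (q (y t) - q (y (t - 1)))⟫ := by
  refine (iqcStorage_nonneg hF hmono hlip hM hstar (y k)).trans ?_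
  induction k with
  | zero =>
    have h := iqcStorage_sub_le hF hmono hlip hM ystar (y 0) ystar
    simpa [iqcStorage, hstar] using h
  | succ k ih =>
    rw [sum_Icc_succ_top (by omega), Nat.add_sub_cancel, ← add_assoc]
    linarith [iqcStorage_sub_le hF hmono hlip hM ystar (y (k + 1)) (y k)]

end Cocoercive

theorem off_by_one_hard_iqc_general {d : ℕ} (m L : ℝ) (hmL : m < L)
    (f : EuclideanSpace ℝ (Fin d) → ℝ)
    (gf : EuclideanSpace ℝ (Fin d) → EuclideanSpace ℝ (Fin d))
    (hgrad : ∀ x, HasGradientAt f (gf x) x)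
    (hlow : ∀ x y, m * ‖x - y‖ ^ 2 ≤ ⟪gf x - gf y, x - y⟫)
    (hup : ∀ x y, ⟪gf x - gf y, x - y⟫ ≤ L * ‖x - y‖ ^ 2)
    (ystar : EuclideanSpace ℝ (Fin d))
    (y : ℕ → EuclideanSpace ℝ (Fin d)) :
    ∀ k : ℕ,
      0 ≤ ⟪gf (y 0) - gf ystar - m • (y 0 - ystar),
            L • (y 0 - ystar) - (gf (y 0) - gf ystar)⟫ +
          ∑ t ∈ Icc 1 k,
            ⟪gf (y t) - gf ystar - m • (y t - ystar),
              L • ((y t - ystar) - (y (t - 1) - ystar))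
                - ((gf (y t) - gf ystar) - (gf (y (t - 1)) - gf ystar))⟫ := by
  intro k
  set q := fun z => gf z - gf ystar - m • (z - ystar)
  have hq : ∀ a b, q a - q b = gf a - gf b - m • (a - b) := fun a b => by simp only [q]; module
  have hF : ∀ z, HasGradientAt (fun z => f z - ⟪gf ystar - m • ystar, z⟫ - m / 2 * ‖z‖ ^ 2)
      (q z) z := fun z => by
    convert ((hgrad z).sub_inner_left (gf ystar - m • ystar)).sub_mul_norm_sq m using 1
    module
  have hmono : ∀ a b, 0 ≤ ⟪q a - q b, a - b⟫ := fun a b => by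
    rw [hq, inner_sub_left, real_inner_smul_left, real_inner_self_eq_norm_sq]
    linarith [hlow a b]
  have hlip : ∀ a b, ⟪q a - q b, a - b⟫ ≤ (L - m) * ‖a - b‖ ^ 2 := fun a b => by
    rw [hq, inner_sub_left, real_inner_smul_left, real_inner_self_eq_norm_sq]
    linarith [hup a b]
  convert off_by_one_iqc_of_hasGradientAt hF hmono hlip (sub_pos.2 hmL) (ystar := ystar)
    (by simp [q]) y k using 3
  · simp only [q]
    module
  · congr 1
    simp only [q]
    module

/-- The off-by-one hard IQC satisfied by gradients of functions in `S(m,L)`. -/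
theorem off_by_one_hard_iqc {d : ℕ} (m L : ℝ) (hm : 0 < m) (hmL : m < L)
    (f : EuclideanSpace ℝ (Fin d) → ℝ)
    (gf : EuclideanSpace ℝ (Fin d) → EuclideanSpace ℝ (Fin d))
    (hgrad : ∀ x, HasGradientAt f (gf x) x)
    (hlow : ∀ x y, m * ‖x - y‖ ^ 2 ≤ ⟪gf x - gf y, x - y⟫)
    (hup : ∀ x y, ⟪gf x - gf y, x - y⟫ ≤ L * ‖x - y‖ ^ 2)
    (ystar : EuclideanSpace ℝ (Fin d))
    (y : ℕ → EuclideanSpace ℝ (Fin d)) :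
    ∀ k : ℕ,
      0 ≤ ⟪gf (y 0) - gf ystar - m • (y 0 - ystar),
            L • (y 0 - ystar) - (gf (y 0) - gf ystar)⟫ +
          ∑ t ∈ Icc 1 k,
            ⟪gf (y t) - gf ystar - m • (y t - ystar),
              L • ((y t - ystar) - (y (t - 1) - ystar))
                - ((gf (y t) - gf ystar) - (gf (y (t - 1)) - gf ystar))⟫ :=
  off_by_one_hard_iqc_general m L hmL f gf hgrad hlow hup ystar y
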